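/- arXiv:2004.10559 — 2 statements merged into one kernel-verified Lean document; each statement's English description precedes it below -/
import Mathlib

section
/- (Hoeffding's inequality for infinitely many summands.) Let (X_k)_{k≥1} be i.i.d. random variables with P(X_1 = 1) = P(X_1 = -1) = 1/2, and let (a_k)_{k≥1} be real numbers with 0 < ∑_{k=1}^∞ a_k² < ∞. Then for every λ > 0, P(∑_{k=1}^∞ a_k X_k ≥ λ) ≤ exp(−λ²/(2·∑_{k=1}^∞ a_k²)). -/
open MeasureTheory ProbabilityTheory Filter Topology Real
open scoped NNReal ENNReal

/-!
Each term `a k * X k` is sub-Gaussian with variance proxy `a k ^ 2`, since the moment generating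
function of a random sign is `cosh t ≤ exp (t ^ 2 / 2)`. By independence the partial sums are
sub-Gaussian with proxy `∑ a k ^ 2`, and by Fatou's lemma this bound on the moment generating
function passes to their almost sure limit `S`. The Chernoff bound for `S` is the claim.
-/

section Fatou

variable {α ι : Type*} [MeasurableSpace α] {μ : Measure α} {l : Filter ι}
  [l.IsCountablyGenerated] [l.NeBot]

lemma lintegral_le_of_tendsto_ae {f : ι → α → ℝ≥0∞} {g : α → ℝ≥0∞} {C : ℝ≥0∞}
    (hf : ∀ i, AEMeasurable (f i) μ) (hfg : ∀ᵐ x ∂μ, Tendsto (fun i ↦ f i x) l (𝓝 (g x)))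
    (hC : ∀ i, ∫⁻ x, f i x ∂μ ≤ C) :
    ∫⁻ x, g x ∂μ ≤ C :=
  calc ∫⁻ x, g x ∂μ = ∫⁻ x, liminf (fun i ↦ f i x) l ∂μ :=
        lintegral_congr_ae (hfg.mono fun _ hx ↦ hx.liminf_eq.symm)
    _ ≤ liminf (fun i ↦ ∫⁻ x, f i x ∂μ) l := lintegral_liminf_le' hf
    _ ≤ C := liminf_le_of_frequently_le' (Frequently.of_forall hC)

end Fatou

namespace ProbabilityTheory

variable {Ω : Type*} [MeasurableSpace Ω] {μ : Measure Ω}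

structure IsRademacher (X : Ω → ℝ) (μ : Measure Ω) : Prop where
  measurable : Measurable X
  measure_eq_one : μ {ω | X ω = 1} = 1 / 2
  measure_eq_neg_one : μ {ω | X ω = -1} = 1 / 2

namespace IsRademacher

variable [IsProbabilityMeasure μ] {X : Ω → ℝ}

lemma ae_eq_one_or_eq_neg_one (hX : IsRademacher X μ) : ∀ᵐ ω ∂μ, X ω = 1 ∨ X ω = -1 := by
  have hA : MeasurableSet {ω | X ω = 1} := hX.measurable (measurableSet_singleton 1)
  have hB : MeasurableSet {ω | X ω = -1} := hX.measurable (measurableSet_singleton (-1))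
  have hdisj : Disjoint {ω | X ω = 1} {ω | X ω = -1} :=
    Set.disjoint_left.2 fun ω (h : X ω = 1) (h' : X ω = -1) ↦ by norm_num [h] at h'
  refine ae_iff.2 ((prob_compl_eq_zero_iff (hA.union hB)).2 ?_)
  rw [measure_union hdisj hB, hX.measure_eq_one, hX.measure_eq_neg_one, ENNReal.add_halves]

lemma integral_comp (hX : IsRademacher X μ) (f : ℝ → ℝ) :
    ∫ ω, f (X ω) ∂μ = (f 1 + f (-1)) / 2 := by
  have hA : MeasurableSet {ω | X ω = 1} := hX.measurable (measurableSet_singleton 1)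
  have hB : MeasurableSet {ω | X ω = -1} := hX.measurable (measurableSet_singleton (-1))
  have hsplit : (fun ω ↦ f (X ω)) =ᵐ[μ]
      fun ω ↦ {ω | X ω = 1}.indicator (fun _ ↦ f 1) ω
        + {ω | X ω = -1}.indicator (fun _ ↦ f (-1)) ω := by
    filter_upwards [hX.ae_eq_one_or_eq_neg_one] with ω hω
    rcases hω with hω | hω <;> norm_num [Set.indicator, hω]
  rw [integral_congr_ae hsplit, integral_add ((integrable_const _).indicator hA)
      ((integrable_const _).indicator hB), integral_indicator_const _ hA,
    integral_indicator_const _ hB, measureReal_def, measureReal_def, hX.measure_eq_one,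
    hX.measure_eq_neg_one]
  simp only [one_div, ENNReal.toReal_inv, ENNReal.toReal_ofNat, smul_eq_mul]
  ring

lemma mgf_eq (hX : IsRademacher X μ) (t : ℝ) : mgf X μ t = cosh t := by
  rw [mgf, hX.integral_comp fun x ↦ exp (t * x), cosh_eq, mul_one, mul_neg_one]

lemma hasSubgaussianMGF (hX : IsRademacher X μ) : HasSubgaussianMGF X 1 μ where
  integrable_exp_mul _ := integrable_exp_mul_of_mem_Icc (a := -1) (b := 1)
    hX.measurable.aemeasurable
    (hX.ae_eq_one_or_eq_neg_one.mono fun ω hω ↦ by rcases hω with hω | hω <;> simp [hω])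
  mgf_le t := by simpa [hX.mgf_eq] using cosh_le_exp_half_sq t

end IsRademacher

namespace HasSubgaussianMGF

lemma mono {X : Ω → ℝ} {c c' : ℝ≥0} (h : HasSubgaussianMGF X c μ) (hc : c ≤ c') :
    HasSubgaussianMGF X c' μ where
  integrable_exp_mul := h.integrable_exp_mul
  mgf_le t := (h.mgf_le t).trans (by gcongr)

lemma const_mul_nnnorm {X : Ω → ℝ} {c : ℝ≥0} (h : HasSubgaussianMGF X c μ) (r : ℝ) :
    HasSubgaussianMGF (fun ω ↦ r * X ω) (‖r‖₊ ^ 2 * c) μ := by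
  -- `const_mul` states the proxy as `⟨r ^ 2, _⟩ * c`, which the coercion `simp` lemmas miss.
  convert h.const_mul r using 1
  refine NNReal.eq ?_
  change ‖r‖ ^ 2 * c = r ^ 2 * c
  simp

lemma of_tendsto_ae {ι : Type*} {l : Filter ι} [l.IsCountablyGenerated] [l.NeBot]
    {Y : ι → Ω → ℝ} {S : Ω → ℝ} {c : ℝ≥0} (hY : ∀ i, HasSubgaussianMGF (Y i) c μ)
    (hS : ∀ᵐ ω ∂μ, Tendsto (fun i ↦ Y i ω) l (𝓝 (S ω))) :
    HasSubgaussianMGF S c μ := by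
  have hexp_nonneg (t : ℝ) {Z : Ω → ℝ} : 0 ≤ᵐ[μ] fun ω ↦ exp (t * Z ω) :=
    ae_of_all _ fun _ ↦ (exp_pos _).le
  have hexp_meas (t : ℝ) : AEStronglyMeasurable (fun ω ↦ exp (t * S ω)) μ :=
    continuous_exp.comp_aestronglyMeasurable
      ((aestronglyMeasurable_of_tendsto_ae l (fun i ↦ (hY i).aestronglyMeasurable) hS).const_mul t)
  have hlintegral (t : ℝ) :
      ∫⁻ ω, ENNReal.ofReal (exp (t * S ω)) ∂μ ≤ ENNReal.ofReal (exp (c * t ^ 2 / 2)) := by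
    refine lintegral_le_of_tendsto_ae
      (fun i ↦ ((hY i).integrable_exp_mul t).aemeasurable.ennreal_ofReal)
      (hS.mono fun ω hω ↦ ((ENNReal.continuous_ofReal.comp continuous_exp).tendsto _).comp
        (hω.const_mul t)) fun i ↦ ?_
    rw [← ofReal_integral_eq_lintegral_ofReal ((hY i).integrable_exp_mul t) (hexp_nonneg t)]
    exact ENNReal.ofReal_le_ofReal ((hY i).mgf_le t)
  refine ⟨fun t ↦ ?_, fun t ↦ ?_⟩
  · exact (lintegral_ofReal_ne_top_iff_integrable (hexp_meas t) (hexp_nonneg t)).1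
      ((hlintegral t).trans_lt ENNReal.ofReal_lt_top).ne
  · rw [mgf, integral_eq_lintegral_of_nonneg_ae (hexp_nonneg t) (hexp_meas t)]
    exact ENNReal.toReal_le_of_le_ofReal (exp_pos _).le (hlintegral t)

end HasSubgaussianMGF

end ProbabilityTheory

theorem hoeffding_inequality_infinite_general
    {Ω : Type*} [MeasurableSpace Ω] (μ : Measure Ω) [IsProbabilityMeasure μ]
    (X : ℕ → Ω → ℝ) (hmeas : ∀ n, Measurable (X n))
    (hindep : iIndepFun X μ)
    (h1 : ∀ n, μ {ω | X n ω = 1} = 1/2) (h2 : ∀ n, μ {ω | X n ω = -1} = 1/2)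
    (a : ℕ → ℝ) (ha : Summable (fun k => (a k) ^ 2))
    (S : Ω → ℝ)
    (hS : ∀ᵐ ω ∂μ,
      Tendsto (fun N : ℕ => ∑ k ∈ Finset.range N, a k * X k ω) atTop (𝓝 (S ω)))
    (lam : ℝ) (hlam : 0 < lam) :
    μ {ω | lam ≤ S ω} ≤ ENNReal.ofReal (Real.exp (-lam ^ 2 / (2 * ∑' k : ℕ, (a k) ^ 2))) := by
  set c : ℝ≥0 := (∑' k, a k ^ 2).toNNReal
  have hc : (c : ℝ) = ∑' k, a k ^ 2 := Real.coe_toNNReal _ (tsum_nonneg fun _ ↦ sq_nonneg _)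
  have hpartial (N : ℕ) :
      HasSubgaussianMGF (fun ω ↦ ∑ k ∈ Finset.range N, a k * X k ω) c μ := by
    have hterm (k : ℕ) : HasSubgaussianMGF (fun ω ↦ a k * X k ω) (‖a k‖₊ ^ 2 * 1) μ :=
      (IsRademacher.hasSubgaussianMGF ⟨hmeas k, h1 k, h2 k⟩).const_mul_nnnorm (a k)
    refine (HasSubgaussianMGF.sum_of_iIndepFun
      (hindep.comp _ fun k ↦ measurable_const_mul (a k)) fun k _ ↦ hterm k).mono ?_
    rw [← NNReal.coe_le_coe, hc]
    simpa using ha.sum_le_tsum (Finset.range N) fun _ _ ↦ sq_nonneg _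
  rw [← ofReal_measureReal, ← hc]
  exact ENNReal.ofReal_le_ofReal
    ((HasSubgaussianMGF.of_tendsto_ae hpartial hS).measure_ge_le hlam.le)

/-- Hoeffding's inequality for infinitely many summands: for i.i.d. signs `X_k` and
reals `a_k` with `0 < ∑ a_k² < ∞`, if `S = ∑_{k=1}^∞ a_k X_k` (the a.s. limit of the
partial sums), then for every `λ > 0`,
`P(S ≥ λ) ≤ exp(-λ²/(2 ∑ a_k²))`. -/
theorem hoeffding_inequality_infinite
    {Ω : Type*} [MeasurableSpace Ω] (μ : Measure Ω) [IsProbabilityMeasure μ]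
    (X : ℕ → Ω → ℝ) (hmeas : ∀ n, Measurable (X n))
    (hindep : iIndepFun X μ)
    (h1 : ∀ n, μ {ω | X n ω = 1} = 1/2) (h2 : ∀ n, μ {ω | X n ω = -1} = 1/2)
    (a : ℕ → ℝ) (ha : Summable (fun k => (a k) ^ 2)) (hapos : 0 < ∑' k : ℕ, (a k) ^ 2)
    (S : Ω → ℝ)
    (hS : ∀ᵐ ω ∂μ,
      Tendsto (fun N : ℕ => ∑ k ∈ Finset.range N, a k * X k ω) atTop (𝓝 (S ω)))
    (lam : ℝ) (hlam : 0 < lam) :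
    μ {ω | lam ≤ S ω} ≤ ENNReal.ofReal (Real.exp (-lam ^ 2 / (2 * ∑' k : ℕ, (a k) ^ 2))) :=
  hoeffding_inequality_infinite_general μ X hmeas hindep h1 h2 a ha S hS lam hlam
end

section
/- Let f : (1/2, ∞) → ℝ satisfy f(σ) → +∞ and f(σ)/√V(σ) → 0 as σ → (1/2)^+, and let δ > 0. For σ > 1/2 define h(t) = ∑_{n=1}^∞ tanh(t/(n^σ·√V(σ)))·(1/(n^σ·√V(σ))). Then for any λ > 0 there exists δ₁ > 0 such that for all σ with 0 < σ − 1/2 ≤ δ₁, any t₀ > 0 solving δ·f(σ) = h(t₀) satisfies −t₀·δ·(1+λ)·f(σ) + ∑_{n=1}^∞ log cosh(t₀/(n^σ·√V(σ))) ≥ −(1/2)·δ²·(1+2λ)²·f(σ)². -/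
/-!
With the weights `a_n = 1/(n^σ √V(σ))` one has `∑ a_n² = 1`, `a_n² ≤ 1/V(σ)` and
`h(t) = ∑ tanh(t a_n) a_n`. From `tanh x ≥ x - x³/3` we get `h(s) ≥ s - s³/(3V(σ))`. Put
`y = δf(σ) = h(t₀) ≥ 0`: once `y²/V(σ)` is small, `h((1+2λ)y) ≥ (1+λ)y`, so monotonicity of `h`
forces `t₀ ≤ (1+2λ)y` unless `y = 0`. On the other hand `log cosh x ≥ (x/2) tanh x` gives
`∑ log cosh(t₀ a_n) ≥ t₀ h(t₀)/2 = t₀y/2`, and the two bounds combine to the claim.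
-/

open Filter Topology

/-- `V σ = ∑_{n=1}^∞ n^{-2σ}`. -/
noncomputable def V (σ : ℝ) : ℝ := ∑' n : ℕ, (n : ℝ) ^ (-(2 * σ))

/-- `h σ t = ∑_{n=1}^∞ tanh(t/(n^σ √V(σ))) · (1/(n^σ √V(σ)))`
(the `n = 0` term vanishes). -/
noncomputable def hfun (σ t : ℝ) : ℝ :=
  ∑' n : ℕ, Real.tanh (t / ((n : ℝ) ^ σ * Real.sqrt (V σ))) *
    (1 / ((n : ℝ) ^ σ * Real.sqrt (V σ)))

open Real Set

lemma nonneg_of_hasDerivAt_of_nonneg {g g' : ℝ → ℝ} (hg : ∀ x, HasDerivAt g (g' x) x)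
    (hg0 : g 0 = 0) (hg' : ∀ x, 0 ≤ x → 0 ≤ g' x) {x : ℝ} (hx : 0 ≤ x) : 0 ≤ g x := by
  have hmono : MonotoneOn g (Ici 0) :=
    monotoneOn_of_hasDerivWithinAt_nonneg (convex_Ici 0)
      (fun y _ => (hg y).continuousAt.continuousWithinAt)
      (fun y _ => (hg y).hasDerivWithinAt) (fun y hy => hg' y (interior_subset hy))
  simpa [hg0] using hmono self_mem_Ici hx hx

namespace Real

lemma tanh_nonneg {x : ℝ} (hx : 0 ≤ x) : 0 ≤ tanh x := by
  rw [tanh_eq_sinh_div_cosh]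
  exact div_nonneg (sinh_nonneg_iff.2 hx) (cosh_pos x).le

lemma one_sub_tanh_sq (x : ℝ) : 1 - tanh x ^ 2 = (cosh x ^ 2)⁻¹ := by
  have hc : cosh x ≠ 0 := (cosh_pos x).ne'
  rw [tanh_eq_sinh_div_cosh]
  field_simp
  linarith [cosh_sq_sub_sinh_sq x]

lemma hasDerivAt_tanh (x : ℝ) : HasDerivAt tanh (1 - tanh x ^ 2) x := by
  have h := (hasDerivAt_sinh x).div (hasDerivAt_cosh x) (cosh_pos x).ne'
  rw [show (sinh / cosh : ℝ → ℝ) = tanh from funext fun y => (tanh_eq_sinh_div_cosh y).symm] at h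
  refine h.congr_deriv ?_
  rw [one_sub_tanh_sq]
  field_simp
  linarith [cosh_sq_sub_sinh_sq x]

lemma hasDerivAt_log_cosh (x : ℝ) : HasDerivAt (fun y => log (cosh y)) (tanh x) x := by
  simpa [← tanh_eq_sinh_div_cosh] using (hasDerivAt_cosh x).log (cosh_pos x).ne'

lemma tanh_strictMono : StrictMono tanh :=
  strictMono_of_hasDerivAt_pos hasDerivAt_tanh fun x => by rw [one_sub_tanh_sq]; positivity

lemma tanh_le_self {x : ℝ} (hx : 0 ≤ x) : tanh x ≤ x := by
  have := nonneg_of_hasDerivAt_of_nonneg (g := fun y => y - tanh y)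
    (fun y => (hasDerivAt_id' y).sub (hasDerivAt_tanh y)) (by simp)
    (fun y _ => by nlinarith [sq_nonneg (tanh y)]) hx
  linarith

lemma sub_cube_div_three_le_tanh {x : ℝ} (hx : 0 ≤ x) : x - x ^ 3 / 3 ≤ tanh x := by
  have hcube (y : ℝ) : HasDerivAt (fun y : ℝ => y ^ 3 / 3) (y ^ 2) y := by
    simpa using (hasDerivAt_pow 3 y).div_const 3
  have := nonneg_of_hasDerivAt_of_nonneg (g := fun y => tanh y - (y - y ^ 3 / 3))
    (fun y => (hasDerivAt_tanh y).sub ((hasDerivAt_id' y).sub (hcube y))) (by simp)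
    (fun y hy => by nlinarith [tanh_le_self hy, tanh_nonneg hy]) hx
  linarith

lemma mul_tanh_div_two_le_log_cosh {x : ℝ} (hx : 0 ≤ x) : x * tanh x / 2 ≤ log (cosh x) := by
  have key (y : ℝ) (hy : 0 ≤ y) : y * (1 - tanh y ^ 2) ≤ tanh y := by
    -- `2y ≤ sinh 2y = 2 sinh y cosh y`, divided by `2 cosh² y`
    have hsinh : y ≤ sinh y * cosh y := by
      have := self_le_sinh_iff.2 (by linarith : 0 ≤ 2 * y)
      rw [sinh_two_mul] at this
      linarith
    rw [one_sub_tanh_sq, tanh_eq_sinh_div_cosh, ← div_eq_mul_inv,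
      div_le_div_iff₀ (by positivity) (cosh_pos y)]
    nlinarith [cosh_pos y]
  have := nonneg_of_hasDerivAt_of_nonneg (g := fun y => log (cosh y) - y * tanh y / 2)
    (fun y => (hasDerivAt_log_cosh y).sub
      (((hasDerivAt_id' y).mul (hasDerivAt_tanh y)).div_const 2)) (by simp)
    (fun y hy => by nlinarith [key y hy]) hx
  linarith

lemma log_cosh_le_sq_div_two (x : ℝ) : log (cosh x) ≤ x ^ 2 / 2 :=
  (log_le_iff_le_exp (cosh_pos x)).2 (cosh_le_exp_half_sq x)

lemma log_cosh_nonneg (x : ℝ) : 0 ≤ log (cosh x) :=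
  log_nonneg (one_le_cosh x)

end Real

noncomputable def tanhSum {ι : Type*} (a : ι → ℝ) (t : ℝ) : ℝ := ∑' i, tanh (t * a i) * a i

section TanhSum

variable {ι : Type*} {a : ι → ℝ}

lemma summable_tanh_mul_mul (ha : ∀ i, 0 ≤ a i) (ha2 : Summable fun i => a i ^ 2) {t : ℝ}
    (ht : 0 ≤ t) : Summable fun i => tanh (t * a i) * a i :=
  Summable.of_nonneg_of_le (fun i => mul_nonneg (tanh_nonneg (mul_nonneg ht (ha i))) (ha i))
    (fun i => (mul_le_mul_of_nonneg_right (tanh_le_self (mul_nonneg ht (ha i))) (ha i)).trans_eq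
      (by ring))
    (ha2.mul_left t)

lemma summable_log_cosh_mul (ha2 : Summable fun i => a i ^ 2) (t : ℝ) :
    Summable fun i => log (cosh (t * a i)) :=
  Summable.of_nonneg_of_le (fun i => log_cosh_nonneg _)
    (fun i => (log_cosh_le_sq_div_two _).trans_eq (by ring)) (ha2.mul_left (t ^ 2 / 2))

lemma tanhSum_nonneg (ha : ∀ i, 0 ≤ a i) {t : ℝ} (ht : 0 ≤ t) : 0 ≤ tanhSum a t :=
  tsum_nonneg fun i => mul_nonneg (tanh_nonneg (mul_nonneg ht (ha i))) (ha i)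

lemma monotoneOn_tanhSum (ha : ∀ i, 0 ≤ a i) (ha2 : Summable fun i => a i ^ 2) :
    MonotoneOn (tanhSum a) (Ici 0) := fun _ hs _ ht hst =>
  Summable.tsum_le_tsum
    (fun i => mul_le_mul_of_nonneg_right
      (tanh_strictMono.monotone (mul_le_mul_of_nonneg_right hst (ha i))) (ha i))
    (summable_tanh_mul_mul ha ha2 hs) (summable_tanh_mul_mul ha ha2 ht)

lemma sub_le_tanhSum (ha : ∀ i, 0 ≤ a i) (ha2 : HasSum (fun i => a i ^ 2) 1) {M : ℝ}
    (hM : ∀ i, a i ^ 2 ≤ M) {s : ℝ} (hs : 0 ≤ s) : s - M * s ^ 3 / 3 ≤ tanhSum a s := by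
  have hfour (i : ι) : a i ^ 4 ≤ M * a i ^ 2 := by
    rw [show a i ^ 4 = a i ^ 2 * a i ^ 2 by ring]
    exact mul_le_mul_of_nonneg_right (hM i) (sq_nonneg _)
  have hsum4 : Summable fun i => a i ^ 4 :=
    Summable.of_nonneg_of_le (fun i => by positivity) hfour (ha2.summable.mul_left M)
  have htsum4 : ∑' i, a i ^ 4 ≤ M :=
    calc ∑' i, a i ^ 4 ≤ ∑' i, M * a i ^ 2 :=
          hsum4.tsum_le_tsum hfour (ha2.summable.mul_left M)
      _ = M := by rw [tsum_mul_left, ha2.tsum_eq, mul_one]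
  have hterm (i : ι) : s * a i ^ 2 - s ^ 3 / 3 * a i ^ 4 ≤ tanh (s * a i) * a i :=
    (mul_le_mul_of_nonneg_right (sub_cube_div_three_le_tanh (mul_nonneg hs (ha i))) (ha i)).trans_eq'
      (by ring)
  have := hasSum_le hterm ((ha2.mul_left s).sub (hsum4.hasSum.mul_left (s ^ 3 / 3)))
    (summable_tanh_mul_mul ha ha2.summable hs).hasSum
  rw [tanhSum]
  nlinarith [pow_nonneg hs 3]

lemma mul_tanhSum_div_two_le_tsum_log_cosh (ha : ∀ i, 0 ≤ a i)
    (ha2 : Summable fun i => a i ^ 2) {t : ℝ} (ht : 0 ≤ t) :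
    t / 2 * tanhSum a t ≤ ∑' i, log (cosh (t * a i)) := by
  rw [tanhSum, ← tsum_mul_left]
  refine Summable.tsum_le_tsum (fun i => ?_) ((summable_tanh_mul_mul ha ha2 ht).mul_left _)
    (summable_log_cosh_mul ha2 t)
  calc t / 2 * (tanh (t * a i) * a i) = t * a i * tanh (t * a i) / 2 := by ring
    _ ≤ log (cosh (t * a i)) := mul_tanh_div_two_le_log_cosh (mul_nonneg ht (ha i))

lemma tanhSum_mul_sub_nonpos (ha : ∀ i, 0 ≤ a i) (ha2 : HasSum (fun i => a i ^ 2) 1) {M : ℝ}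
    (hM : ∀ i, a i ^ 2 ≤ M) {lam t : ℝ} (hlam : 0 < lam) (ht : 0 ≤ t)
    (hsmall : (1 + 2 * lam) ^ 3 * M * tanhSum a t ^ 2 ≤ 3 * lam) :
    tanhSum a t * (t - (1 + 2 * lam) * tanhSum a t) ≤ 0 := by
  set y := tanhSum a t
  have hy : 0 ≤ y := tanhSum_nonneg ha ht
  rcases le_total t ((1 + 2 * lam) * y) with hle | hlt
  · exact mul_nonpos_of_nonneg_of_nonpos hy (by linarith)
  have hs : 0 ≤ (1 + 2 * lam) * y := by positivity
  have hlower : (1 + 2 * lam) * y - M * ((1 + 2 * lam) * y) ^ 3 / 3 ≤ y :=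
    (sub_le_tanhSum ha ha2 hM hs).trans
      (monotoneOn_tanhSum ha ha2.summable hs ht hlt)
  have hcube : M * ((1 + 2 * lam) * y) ^ 3 / 3 ≤ lam * y := by
    nlinarith [mul_le_mul_of_nonneg_right hsmall hy]
  have hy0 : y = 0 := le_antisymm (by nlinarith) hy
  simp [hy0]

lemma neg_sq_tanhSum_le_tsum_log_cosh_sub (ha : ∀ i, 0 ≤ a i) (ha2 : HasSum (fun i => a i ^ 2) 1)
    {M : ℝ} (hM : ∀ i, a i ^ 2 ≤ M) {lam t : ℝ} (hlam : 0 < lam) (ht : 0 ≤ t)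
    (hsmall : (1 + 2 * lam) ^ 3 * M * tanhSum a t ^ 2 ≤ 3 * lam) :
    -(1 / 2) * (1 + 2 * lam) ^ 2 * tanhSum a t ^ 2 ≤
      -(t * (1 + lam) * tanhSum a t) + ∑' i, log (cosh (t * a i)) := by
  have hlogcosh := mul_tanhSum_div_two_le_tsum_log_cosh ha ha2.summable ht
  have ht_le := tanhSum_mul_sub_nonpos ha ha2 hM hlam ht hsmall
  nlinarith [mul_le_mul_of_nonneg_left ht_le (by positivity : (0 : ℝ) ≤ 1 + 2 * lam)]

end TanhSum

noncomputable def normalizedWeight (σ : ℝ) (n : ℕ) : ℝ := ((n : ℝ) ^ σ * √(V σ))⁻¹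

section NormalizedWeight

variable {σ : ℝ}

lemma V_nonneg (σ : ℝ) : 0 ≤ V σ :=
  tsum_nonneg fun n => rpow_nonneg n.cast_nonneg _

lemma hasSum_V (hσ : 1 / 2 < σ) : HasSum (fun n : ℕ => (n : ℝ) ^ (-(2 * σ))) (V σ) :=
  (summable_nat_rpow.2 (by linarith)).hasSum

lemma V_pos (hσ : 1 / 2 < σ) : 0 < V σ :=
  (hasSum_V hσ).summable.tsum_pos (fun n => rpow_nonneg n.cast_nonneg _) 1 (by simp)

lemma normalizedWeight_nonneg (σ : ℝ) (n : ℕ) : 0 ≤ normalizedWeight σ n := by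
  unfold normalizedWeight; positivity

lemma normalizedWeight_sq (σ : ℝ) (n : ℕ) :
    normalizedWeight σ n ^ 2 = (n : ℝ) ^ (-(2 * σ)) / V σ := by
  rw [normalizedWeight, inv_pow, mul_pow, sq_sqrt (V_nonneg σ), ← rpow_mul_natCast n.cast_nonneg,
    rpow_neg n.cast_nonneg, mul_inv, div_eq_mul_inv]
  norm_num [mul_comm]

lemma hasSum_normalizedWeight_sq (hσ : 1 / 2 < σ) :
    HasSum (fun n => normalizedWeight σ n ^ 2) 1 := by
  simp_rw [normalizedWeight_sq]
  simpa [(V_pos hσ).ne'] using (hasSum_V hσ).div_const (V σ)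

lemma normalizedWeight_sq_le (hσ : 0 < σ) (n : ℕ) : normalizedWeight σ n ^ 2 ≤ (V σ)⁻¹ := by
  rw [normalizedWeight_sq, div_eq_mul_inv]
  refine mul_le_of_le_one_left (inv_nonneg.2 (V_nonneg σ)) ?_
  rcases n.eq_zero_or_pos with rfl | hn
  · simp [zero_rpow (by linarith : -(2 * σ) ≠ 0)]
  · exact rpow_le_one_of_one_le_of_nonpos (by exact_mod_cast hn) (by linarith)

lemma hfun_eq_tanhSum (σ t : ℝ) : hfun σ t = tanhSum (normalizedWeight σ) t := by
  simp only [hfun, tanhSum, normalizedWeight, div_eq_mul_inv, one_mul]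

end NormalizedWeight

theorem t0_log_cosh_lower_bound_general
    (f : ℝ → ℝ)
    (hf_small : Tendsto (fun σ => f σ / Real.sqrt (V σ)) (𝓝[>] (1/2 : ℝ)) (𝓝 0))
    (δ : ℝ) :
    ∀ lam > (0 : ℝ), ∃ δ₁ > (0 : ℝ),
      ∀ σ : ℝ, 1/2 < σ → σ - 1/2 ≤ δ₁ →
        ∀ t₀ : ℝ, 0 < t₀ → δ * f σ = hfun σ t₀ →
          -(t₀ * δ * (1 + lam) * f σ) +
              ∑' n : ℕ, Real.log (Real.cosh (t₀ / ((n : ℝ) ^ σ * Real.sqrt (V σ)))) ≥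
            -(1/2) * δ ^ 2 * (1 + 2 * lam) ^ 2 * (f σ) ^ 2 := by
  intro lam hlam
  have hsmall : ∀ᶠ σ in 𝓝[>] (1/2 : ℝ),
      (1 + 2 * lam) ^ 3 * (V σ)⁻¹ * (δ * f σ) ^ 2 ≤ 3 * lam := by
    have hlim : Tendsto (fun σ => (1 + 2 * lam) ^ 3 * (δ * (f σ / √(V σ))) ^ 2)
        (𝓝[>] (1/2)) (𝓝 0) := by
      simpa using ((hf_small.const_mul δ).pow 2).const_mul ((1 + 2 * lam) ^ 3)
    filter_upwards [hlim.eventually (ge_mem_nhds (by positivity : (0 : ℝ) < 3 * lam))]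
      with σ hσ
    rwa [mul_div_assoc', div_pow, sq_sqrt (V_nonneg σ), div_eq_inv_mul, ← mul_assoc] at hσ
  obtain ⟨u, hu, hIoc⟩ := mem_nhdsGT_iff_exists_Ioc_subset.1 hsmall
  refine ⟨u - 1/2, sub_pos.2 hu, fun σ hσ hσu t₀ ht₀ hy => ?_⟩
  rw [hfun_eq_tanhSum] at hy
  have hσsmall := hIoc ⟨hσ, by linarith⟩
  rw [mem_ofPred_eq, hy] at hσsmall
  have key := neg_sq_tanhSum_le_tsum_log_cosh_sub (normalizedWeight_nonneg σ)
    (hasSum_normalizedWeight_sq hσ) (normalizedWeight_sq_le (by linarith)) hlam ht₀.le hσsmall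
  rw [← hy] at key
  simp only [normalizedWeight, ← div_eq_mul_inv] at key
  linear_combination key

/-- If `f(σ) → ∞` and `f(σ)/√V(σ) → 0` as `σ → (1/2)⁺` and `δ > 0`, then for any `λ > 0`
there is `δ₁ > 0` such that for `0 < σ - 1/2 ≤ δ₁`, any `t₀ > 0` solving `δ f(σ) = h(t₀)`
satisfies `-t₀ δ (1+λ) f(σ) + ∑_{n=1}^∞ log cosh(t₀/(n^σ √V(σ))) ≥ -(1/2) δ² (1+2λ)² f(σ)²`. -/
theorem t0_log_cosh_lower_bound
    (f : ℝ → ℝ)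
    (hf_top : Tendsto f (𝓝[>] (1/2 : ℝ)) atTop)
    (hf_small : Tendsto (fun σ => f σ / Real.sqrt (V σ)) (𝓝[>] (1/2 : ℝ)) (𝓝 0))
    (δ : ℝ) (hδ : 0 < δ) :
    ∀ lam > (0 : ℝ), ∃ δ₁ > (0 : ℝ),
      ∀ σ : ℝ, 1/2 < σ → σ - 1/2 ≤ δ₁ →
        ∀ t₀ : ℝ, 0 < t₀ → δ * f σ = hfun σ t₀ →
          -(t₀ * δ * (1 + lam) * f σ) +
              ∑' n : ℕ, Real.log (Real.cosh (t₀ / ((n : ℝ) ^ σ * Real.sqrt (V σ)))) ≥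
            -(1/2) * δ ^ 2 * (1 + 2 * lam) ^ 2 * (f σ) ^ 2 :=
  t0_log_cosh_lower_bound_general f hf_small δ
end
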